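/- For a triangle with vertices A, B, C in ℝ² that are not all equal, the quality metric attains its maximum value Q = 1 if and only if the triangle is equilateral, i.e., ‖B−A‖ = ‖C−B‖ = ‖A−C‖ and this common length is positive. -/

import Mathlib

/-- The determinant of two plane vectors: det(v, w) = v₁w₂ − v₂w₁. -/
noncomputable def det2 (v w : EuclideanSpace ℝ (Fin 2)) : ℝ := v 0 * w 1 - v 1 * w 0

/-- The area of the triangle with vertices A, B, C: A_Δ = (1/2)|det(B−A, C−A)|. -/
noncomputable def triArea (A B C : EuclideanSpace ℝ (Fin 2)) : ℝ :=
  (1 / 2) * |det2 (B - A) (C - A)|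

/-- The equilateral-relative mesh quality metric
Q = 4√3 · A_Δ / (‖B−A‖² + ‖C−B‖² + ‖A−C‖²). -/
noncomputable def triQ (A B C : EuclideanSpace ℝ (Fin 2)) : ℝ :=
  4 * Real.sqrt 3 * triArea A B C / (‖B - A‖ ^ 2 + ‖C - B‖ ^ 2 + ‖A - C‖ ^ 2)

lemma aux_pos {a b : ℝ} (h : ¬(a = 0 ∧ b = 0)) : 0 < a ^ 2 + b ^ 2 := by
  rcases eq_or_ne a 0 with h'|h'
  · have hb' : b ≠ 0 := fun hb0 => h ⟨h', hb0⟩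
    have h1 : 0 < |b| := abs_pos.mpr hb'
    have h2 : 0 < b ^ 2 := by
      calc (0:ℝ) < |b| ^ 2 := pow_pos h1 2
        _ = b ^ 2 := sq_abs b
    nlinarith [sq_nonneg a]
  · have h1 : 0 < |a| := abs_pos.mpr h'
    have h2 : 0 < a ^ 2 := by
      calc (0:ℝ) < |a| ^ 2 := pow_pos h1 2
        _ = a ^ 2 := sq_abs a
    nlinarith [sq_nonneg b]

lemma norm_sq_coords (x : EuclideanSpace ℝ (Fin 2)) : ‖x‖ ^ 2 = x 0 ^ 2 + x 1 ^ 2 := by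
  rw [EuclideanSpace.norm_eq, Real.sq_sqrt (by positivity)]
  simp [Fin.sum_univ_two, sq_abs]

set_option maxHeartbeats 1000000 in
/-- For a triangle with vertices not all equal, the quality metric attains its maximum value
Q = 1 if and only if the triangle is equilateral. -/
theorem quality_eq_one_iff_equilateral (A B C : EuclideanSpace ℝ (Fin 2))
    (h : ¬(A = B ∧ B = C)) :
    triQ A B C = 1 ↔
      (‖B - A‖ = ‖C - B‖ ∧ ‖C - B‖ = ‖A - C‖ ∧ 0 < ‖B - A‖) := by
  set a : ℝ := B 0 - A 0 with ha
  set b : ℝ := B 1 - A 1 with hb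
  set c : ℝ := C 0 - A 0 with hc
  set d : ℝ := C 1 - A 1 with hd
  have hBA0 : (B - A) 0 = a := rfl
  have hBA1 : (B - A) 1 = b := rfl
  have hCA0 : (C - A) 0 = c := rfl
  have hCA1 : (C - A) 1 = d := rfl
  have hCB0 : (C - B) 0 = c - a := by simp [hc, ha]
  have hCB1 : (C - B) 1 = d - b := by simp [hd, hb]
  have hAC0 : (A - C) 0 = -c := by simp [hc]
  have hAC1 : (A - C) 1 = -d := by simp [hd]
  have nBA : ‖B - A‖ ^ 2 = a ^ 2 + b ^ 2 := by
    rw [norm_sq_coords, hBA0, hBA1]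
  have nCB : ‖C - B‖ ^ 2 = (c - a) ^ 2 + (d - b) ^ 2 := by
    rw [norm_sq_coords, hCB0, hCB1]
  have nAC : ‖A - C‖ ^ 2 = c ^ 2 + d ^ 2 := by
    rw [norm_sq_coords, hAC0, hAC1]; ring
  have s3 : Real.sqrt 3 ^ 2 = 3 := Real.sq_sqrt (by norm_num)
  have s3pos : (0:ℝ) < Real.sqrt 3 := Real.sqrt_pos.mpr (by norm_num)
  set s : ℝ := Real.sqrt 3 with hs
  set D : ℝ := a * d - b * c with hD
  have hDet : det2 (B - A) (C - A) = D := by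
    simp [det2, hBA0, hBA1, hCA0, hCA1, hD]
  have hne : ¬(a = 0 ∧ b = 0 ∧ c = 0 ∧ d = 0) := by
    rintro ⟨h1, h2, h3, h4⟩
    rw [ha] at h1; rw [hb] at h2; rw [hc] at h3; rw [hd] at h4
    have e1 : A 0 = B 0 := by linarith
    have e2 : A 1 = B 1 := by linarith
    have e3 : B 0 = C 0 := by linarith
    have e4 : B 1 = C 1 := by linarith
    apply h
    constructor
    · ext i; fin_cases i
      · exact e1
      · exact e2
    · ext i; fin_cases i
      · exact e3
      · exact e4
  have hQ : triQ A B C =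
      4 * s * ((1/2) * |D|) / (a^2 + b^2 + ((c-a)^2 + (d-b)^2) + (c^2 + d^2)) := by
    rw [triQ, triArea, hDet, nBA, nCB, nAC]
  constructor
  · intro hq
    rw [hQ] at hq
    have hS0 : a^2 + b^2 + ((c-a)^2 + (d-b)^2) + (c^2 + d^2) ≠ 0 := by
      intro h0
      rw [h0, div_zero] at hq
      norm_num at hq
    have heq : 2 * s * |D| = a^2 + b^2 + ((c-a)^2 + (d-b)^2) + (c^2 + d^2) := by
      rw [div_eq_one_iff_eq hS0] at hq
      linear_combination hq
    have key : a^2 + b^2 = (c-a)^2 + (d-b)^2 ∧ (c-a)^2 + (d-b)^2 = c^2 + d^2 ∧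
        ¬(a = 0 ∧ b = 0) := by
      rcases abs_cases D with ⟨hD1, _⟩ | ⟨hD1, _⟩
      · rw [hD1, hD] at heq
        have sos : (2*c - a + s*b)^2 + (2*d - s*a - b)^2 = 0 := by
          linear_combination (a^2 + b^2) * s3 - 2 * heq
        have hz := (add_eq_zero_iff_of_nonneg (sq_nonneg _) (sq_nonneg _)).mp sos
        have h1 : 2*c - a + s*b = 0 := (pow_eq_zero_iff two_ne_zero).mp hz.1
        have h2 : 2*d - s*a - b = 0 := (pow_eq_zero_iff two_ne_zero).mp hz.2
        have hc' : c = (a - s*b)/2 := by linear_combination h1 / 2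
        have hd' : d = (s*a + b)/2 := by linear_combination h2 / 2
        refine ⟨?_, ?_, ?_⟩
        · rw [hc', hd']; linear_combination (-(a^2+b^2)/4) * s3
        · rw [hc', hd']; ring
        · rintro ⟨ha0, hb0⟩
          exact hne ⟨ha0, hb0, by rw [hc', ha0, hb0]; ring, by rw [hd', ha0, hb0]; ring⟩
      · rw [hD1, hD] at heq
        have sos : (2*c - a - s*b)^2 + (2*d + s*a - b)^2 = 0 := by
          linear_combination (a^2 + b^2) * s3 - 2 * heq
        have hz := (add_eq_zero_iff_of_nonneg (sq_nonneg _) (sq_nonneg _)).mp sos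
        have h1 : 2*c - a - s*b = 0 := (pow_eq_zero_iff two_ne_zero).mp hz.1
        have h2 : 2*d + s*a - b = 0 := (pow_eq_zero_iff two_ne_zero).mp hz.2
        have hc' : c = (a + s*b)/2 := by linear_combination h1 / 2
        have hd' : d = (b - s*a)/2 := by linear_combination h2 / 2
        refine ⟨?_, ?_, ?_⟩
        · rw [hc', hd']; linear_combination (-(a^2+b^2)/4) * s3
        · rw [hc', hd']; ring
        · rintro ⟨ha0, hb0⟩
          exact hne ⟨ha0, hb0, by rw [hc', ha0, hb0]; ring, by rw [hd', ha0, hb0]; ring⟩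
    obtain ⟨k1, k2, k3⟩ := key
    have e1 : ‖B - A‖ = ‖C - B‖ := by
      rw [← Real.sqrt_sq (norm_nonneg (B - A)), ← Real.sqrt_sq (norm_nonneg (C - B)),
        nBA, nCB, k1]
    have e2 : ‖C - B‖ = ‖A - C‖ := by
      rw [← Real.sqrt_sq (norm_nonneg (C - B)), ← Real.sqrt_sq (norm_nonneg (A - C)),
        nCB, nAC, k2]
    refine ⟨e1, e2, ?_⟩
    have hsq : 0 < ‖B - A‖ ^ 2 := by
      rw [nBA]; exact aux_pos k3
    rcases (norm_nonneg (B - A)).lt_or_eq with h'|h'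
    · exact h'
    · exfalso; rw [← h'] at hsq; norm_num at hsq
  · rintro ⟨e1, e2, e3⟩
    set L := ‖B - A‖ with hL
    have hL2 : a^2 + b^2 = L^2 := nBA.symm
    have hL2' : (c-a)^2 + (d-b)^2 = L^2 := by rw [← nCB, ← e1]
    have hL2'' : c^2 + d^2 = L^2 := by rw [← nAC, ← e2, ← e1]
    have hT : a*c + b*d = L^2/2 := by
      linear_combination (1/2) * hL2 + (1/2) * hL2'' - (1/2) * hL2'
    have hDsq : D^2 = 3*(L^2)^2/4 := by
      have lag : D^2 = (a^2+b^2)*(c^2+d^2) - (a*c+b*d)^2 := by rw [hD]; ring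
      rw [lag, hL2, hL2'', hT]; ring
    have hDabs : |D| = s * L^2 / 2 := by
      rw [← Real.sqrt_sq_eq_abs, hDsq,
        show (3*(L^2)^2/4 : ℝ) = (s * L^2 / 2)^2 by linear_combination (-(L^2)^2/4) * s3]
      exact Real.sqrt_sq (by positivity)
    rw [hQ, hDabs, hL2, hL2', hL2'']
    have hLpos : (0:ℝ) < L := e3
    rw [div_eq_one_iff_eq (by positivity)]
    linear_combination (L^2) * s3
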